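/- arXiv:2210.07048 — 6 statements merged into one kernel-verified Lean document; each statement's English description precedes it below -/
import Mathlib

section
/- Let x_0 < x_1 < ... < x_k be real numbers and Q a real polynomial such that Q(x_i) ≥ 0 for even i and Q(x_i) ≤ 0 for odd i (or vice versa with signs reversed). Then Q has at least k roots, counted with multiplicity, in the interval [x_0, x_k]. -/
/-! Induction on `k`. Weak alternation of `Q` at `x₀ < x₁` yields a root `r ∈ [x₀, x₁]` together
with a point `z ∈ [x₀, x₁]` at which the deflated polynomial `P = Q / (X - r)` is `≤ 0`: `r = x₁`,
`z = x₀` if `Q(x₁) = 0`, and otherwise `r` from the intermediate value theorem, `r < z = x₁`.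
Since `x - r > 0` for `x ≥ x₂`, the polynomial `-P` alternates weakly at `z < x₂ < ⋯ < xₖ`, so it
has at least `k - 1` roots in `[x₀, xₖ]`, and with `r` this gives `k` roots of `Q`. -/

open Polynomial Set

theorem neg_one_pow_mul_nonneg_of_even_of_odd {R : Type*} [Ring R] [PartialOrder R]
    [IsOrderedRing R] {n : ℕ} {a : R}
    (he : Even n → 0 ≤ a) (ho : Odd n → a ≤ 0) : 0 ≤ (-1) ^ n * a := by
  rcases n.even_or_odd with h | h
  · simpa [h.neg_one_pow] using he h
  · simpa [h.neg_one_pow] using ho h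

namespace Polynomial

theorem eval_eq_sub_mul_eval_divByMonic {R : Type*} [CommRing R] {Q : R[X]} {r : R}
    (hr : Q.IsRoot r) (y : R) : Q.eval y = (y - r) * (Q /ₘ (X - C r)).eval y := by
  conv_lhs => rw [← mul_divByMonic_eq_iff_isRoot.mpr hr]
  rw [eval_mul, eval_sub, eval_X, eval_C]

theorem divByMonic_X_sub_C_ne_zero {R : Type*} [CommRing R] {Q : R[X]} {r : R}
    (hQ : Q ≠ 0) (hr : Q.IsRoot r) : Q /ₘ (X - C r) ≠ 0 := by
  intro h
  rw [← mul_divByMonic_eq_iff_isRoot.mpr hr, h, mul_zero] at hQ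
  exact hQ rfl

theorem roots_eq_cons_roots_divByMonic {R : Type*} [CommRing R] [IsDomain R] {Q : R[X]} {r : R}
    (hQ : Q ≠ 0) (hr : Q.IsRoot r) : Q.roots = r ::ₘ (Q /ₘ (X - C r)).roots := by
  have hfac := mul_divByMonic_eq_iff_isRoot.mpr hr
  conv_lhs => rw [← hfac]
  rw [roots_mul (hfac.symm ▸ hQ), roots_X_sub_C, Multiset.singleton_add]

theorem exists_isRoot_mem_Icc_eval_divByMonic_nonpos {Q : ℝ[X]} {a b : ℝ} (hab : a < b)
    (ha : 0 ≤ Q.eval a) (hb : Q.eval b ≤ 0) :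
    ∃ r ∈ Icc a b, Q.IsRoot r ∧ ∃ z ∈ Icc a b, (Q /ₘ (X - C r)).eval z ≤ 0 := by
  by_cases hb0 : Q.eval b = 0
  · refine ⟨b, right_mem_Icc.mpr hab.le, hb0, a, left_mem_Icc.mpr hab.le, ?_⟩
    rw [eval_eq_sub_mul_eval_divByMonic hb0 a] at ha
    nlinarith
  · obtain ⟨r, hr, hQr⟩ := intermediate_value_Icc' hab.le Q.continuous.continuousOn
      (mem_Icc.mpr ⟨hb, ha⟩)
    have hrb : r < b := lt_of_le_of_ne hr.2 (by rintro rfl; exact hb0 hQr)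
    refine ⟨r, hr, hQr, b, right_mem_Icc.mpr hab.le, ?_⟩
    rw [eval_eq_sub_mul_eval_divByMonic hQr b] at hb
    nlinarith

theorem le_card_roots_filter_Icc_of_alternating :
    ∀ (k : ℕ) (x : Fin (k + 1) → ℝ), StrictMono x → ∀ Q : ℝ[X], Q ≠ 0 →
      (∀ i : Fin (k + 1), 0 ≤ (-1) ^ (i : ℕ) * Q.eval (x i)) →
      k ≤ Multiset.card (Q.roots.filter (· ∈ Icc (x 0) (x (Fin.last k))))
  | 0, _, _, _, _, _ => Nat.zero_le _
  | k + 1, x, hx, Q, hQ, halt => by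
    have hQx0 : 0 ≤ Q.eval (x 0) := by simpa using halt 0
    have hQx1 : Q.eval (x 1) ≤ 0 := by simpa using halt 1
    obtain ⟨r, hr, hQr, z, hz, hPz⟩ := 
      exists_isRoot_mem_Icc_eval_divByMonic_nonpos (hx Fin.zero_lt_one) hQx0 hQx1
    have hx1_lt : ∀ j : Fin k, x 1 < x j.succ.succ := fun j =>
      hx (Fin.succ_lt_succ_iff.mpr (Fin.succ_pos j))
    set P := Q /ₘ (X - C r)
    set y : Fin (k + 1) → ℝ := Fin.cons z fun j => x j.succ.succ
    have hy : StrictMono y := Fin.strictMono_cons.mpr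
      ⟨fun j => hz.2.trans_lt (hx1_lt j), hx.comp (Fin.strictMono_succ.comp Fin.strictMono_succ)⟩
    have hy_mem : ∀ j, y j ∈ Icc (x 0) (x (Fin.last (k + 1))) := by
      refine Fin.cases ⟨hz.1, hz.2.trans (hx.monotone (Fin.le_last 1))⟩ fun j => ?_
      exact ⟨hx.monotone (Fin.zero_le _), hx.monotone (Fin.le_last _)⟩
    have halt' : ∀ j : Fin (k + 1), 0 ≤ (-1) ^ (j : ℕ) * (-P).eval (y j) := by
      refine Fin.cases (by simpa [y] using hPz) fun j => ?_
      have hpos : 0 < x j.succ.succ - r := sub_pos.mpr (hr.2.trans_lt (hx1_lt j))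
      have hQj := halt j.succ.succ
      rw [eval_eq_sub_mul_eval_divByMonic hQr] at hQj
      simp only [Fin.val_succ, pow_succ, y, Fin.cons_succ, eval_neg] at hQj ⊢
      nlinarith
    have hP := le_card_roots_filter_Icc_of_alternating k y hy (-P)
      (neg_ne_zero.mpr (divByMonic_X_sub_C_ne_zero hQ hQr)) halt'
    rw [roots_neg] at hP
    have hsub : Icc (y 0) (y (Fin.last k)) ⊆ Icc (x 0) (x (Fin.last (k + 1))) :=
      Icc_subset_Icc (hy_mem 0).1 (hy_mem _).2
    have hr' : r ∈ Icc (x 0) (x (Fin.last (k + 1))) :=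
      ⟨hr.1, hr.2.trans (hx.monotone (Fin.le_last 1))⟩
    rw [roots_eq_cons_roots_divByMonic hQ hQr, Multiset.filter_cons_of_pos _ hr',
      Multiset.card_cons]
    exact Nat.succ_le_succ (hP.trans (Multiset.card_le_card
      (Multiset.monotone_filter_right _ fun _ h => hsub h)))

end Polynomial

theorem stmt_0 (k : ℕ) (x : Fin (k + 1) → ℝ) (hx : StrictMono x)
    (Q : Polynomial ℝ)
    (hsign : (∀ i : Fin (k + 1), (Even (i : ℕ) → 0 ≤ Q.eval (x i)) ∧
                (Odd (i : ℕ) → Q.eval (x i) ≤ 0)) ∨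
             (∀ i : Fin (k + 1), (Even (i : ℕ) → Q.eval (x i) ≤ 0) ∧
                (Odd (i : ℕ) → 0 ≤ Q.eval (x i)))) :
    Q = 0 ∨ (k : ℕ) ≤
      Multiset.card (Q.roots.filter fun r => r ∈ Set.Icc (x 0) (x (Fin.last k))) := by
  by_cases hQ : Q = 0
  · exact Or.inl hQ
  right
  rcases hsign with h | h
  · exact le_card_roots_filter_Icc_of_alternating k x hx Q hQ fun i =>
      neg_one_pow_mul_nonneg_of_even_of_odd (h i).1 (h i).2
  · rw [← roots_neg]
    refine le_card_roots_filter_Icc_of_alternating k x hx (-Q) (neg_ne_zero.mpr hQ) fun i => ?_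
    rw [eval_neg]
    exact neg_one_pow_mul_nonneg_of_even_of_odd (fun he => neg_nonneg.mpr ((h i).1 he))
      (fun ho => neg_nonpos.mpr ((h i).2 ho))
end

section
/- Let m ≥ 2 and let P be a real polynomial of degree at most m with P ≠ T_m, where T_m is the m-th Chebyshev polynomial of the first kind. Suppose P − T_m has a zero of multiplicity at least 2 at some ξ ∈ (−1,1) with ξ ≠ cos(iπ/m) for every i = 1, ..., m−1. Then there exists x ∈ (−1, cos(π/m)) with |P(x)| > 1. -/
/-!
Suppose `|P| ≤ 1` on `(-1, cos (π/m))`, hence on its closure. At the Chebyshev nodes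
`cᵢ = cos (iπ/m)`, `1 ≤ i ≤ m`, we have `T_m(cᵢ) = (-1)ⁱ`, so `Q = P - T_m` satisfies
`(-1)ⁱ Q(cᵢ) ≤ 0`. Dividing out the double root, `Q = (X - ξ)² Q₁` with `deg Q₁ ≤ m - 2`, and
since `ξ` is not a node, `Q₁` weakly alternates in sign on the `m` nodes. A polynomial of degree
`< n` that weakly alternates on `n + 1` points vanishes: its `n`-th divided difference is `0`,
but by Lagrange interpolation it is a sum of terms of equal sign, so all values at the points are
`0`. Hence `Q₁ = 0` and `P = T_m`.
-/

open Polynomial Real Finset Polynomial.Chebyshev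

lemma zero_lt_negOnePow_mul_prod_erase_sub {n i : ℕ} {v : ℕ → ℝ}
    (hv : StrictAntiOn v (range (n + 1))) (hi : i ≤ n) :
    0 < (-1) ^ i * ∏ j ∈ (range (n + 1)).erase i, (v i - v j) := by
  have hmem : ∀ {k}, k ≤ n → k ∈ (range (n + 1) : Set ℕ) := fun hk => by simpa using hk
  have hlow : 0 < ∏ j ∈ range i, ((-1) * (v i - v j)) :=
    prod_pos fun j hj => mul_pos_of_neg_of_neg neg_one_lt_zero <| sub_neg.mpr <|
      hv (hmem (by grind)) (hmem hi) (mem_range.mp hj)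
  rw [prod_mul_distrib, prod_const, card_range] at hlow
  have hhigh : 0 < ∏ j ∈ Ioc i n, (v i - v j) :=
    prod_pos fun j hj => sub_pos.mpr <|
      hv (hmem hi) (hmem (mem_Ioc.mp hj).2) (mem_Ioc.mp hj).1
  have hsplit : (range (n + 1)).erase i = range i ∪ Ioc i n := by grind
  rw [hsplit, prod_union (by grind [disjoint_iff_ne]), ← mul_assoc]
  exact mul_pos hlow hhigh

theorem Polynomial.eq_zero_of_degree_lt_of_negOnePow_mul_eval_nonneg {f : ℝ[X]} {n : ℕ}
    {v : ℕ → ℝ} (hv : StrictAntiOn v (range (n + 1))) (hdeg : f.degree < n)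
    (hsign : ∀ i ≤ n, 0 ≤ (-1) ^ i * f.eval (v i)) : f = 0 := by
  have hinj : Set.InjOn v (range (n + 1)) := hv.injOn
  have hcard : #(range (n + 1)) = n + 1 := card_range _
  have hdeg' : f.degree < #(range (n + 1)) :=
    hdeg.trans (by rw [hcard]; exact_mod_cast n.lt_succ_self)
  have hterm : ∀ i ∈ range (n + 1),
      0 ≤ f.eval (v i) / ∏ j ∈ (range (n + 1)).erase i, (v i - v j) := by
    intro i hi
    have hi := mem_range_succ_iff.mp hi
    rw [← mul_div_mul_left _ _ (pow_ne_zero i (by norm_num : (-1 : ℝ) ≠ 0))]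
    exact div_nonneg (hsign i hi) (zero_lt_negOnePow_mul_prod_erase_sub hv hi).le
  have hsum : ∑ i ∈ range (n + 1),
      f.eval (v i) / ∏ j ∈ (range (n + 1)).erase i, (v i - v j) = 0 := by
    rw [← Lagrange.coeff_eq_sum hinj hdeg', hcard, Nat.add_sub_cancel]
    exact coeff_eq_zero_of_degree_lt hdeg
  refine eq_zero_of_degree_lt_of_eval_index_eq_zero _ hinj hdeg' fun i hi => ?_
  have hzero := (sum_eq_zero_iff_of_nonneg hterm).mp hsum i hi
  rwa [div_eq_zero_iff, or_iff_left] at hzero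
  have hi := mem_range_succ_iff.mp hi
  exact right_ne_zero_of_mul (zero_lt_negOnePow_mul_prod_erase_sub hv hi).ne'

lemma abs_eval_le_one_of_forall_mem_Ioo {P : ℝ[X]} {a b : ℝ} (hab : a < b)
    (hP : ∀ x ∈ Set.Ioo a b, |P.eval x| ≤ 1) : ∀ x ∈ Set.Icc a b, |P.eval x| ≤ 1 := by
  have hmaps : Set.MapsTo (P.eval ·) (Set.Ioo a b) (Set.Icc (-1) 1) :=
    fun x hx => abs_le.mp (hP x hx)
  intro x hx
  rw [← closure_Ioo hab.ne] at hx
  simpa [abs_le, closure_Icc] using hmaps.closure P.continuous hx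

lemma zero_le_negOnePow_mul_eval_sub_T_node {m i : ℕ} (hi : i + 1 ≤ m) {P : ℝ[X]}
    (hP : |P.eval (node m (i + 1))| ≤ 1) :
    0 ≤ (-1) ^ i * (P - T ℝ m).eval (node m (i + 1)) := by
  have hsq : ((-1 : ℝ) ^ i) ^ 2 = 1 := by rw [← pow_mul, pow_mul', neg_one_sq, one_pow]
  have hPi : |(-1) ^ i * P.eval (node m (i + 1))| ≤ 1 := by
    rwa [abs_mul, abs_neg_one_pow, one_mul]
  rw [eval_sub, eval_T_real_node (mem_Iic.mpr hi), pow_succ]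
  nlinarith [neg_le_of_abs_le hPi]

lemma degree_lt_of_natDegree_X_sub_C_sq_mul_le {R : Type*} [CommRing R] [IsDomain R]
    {q : R[X]} {a : R} {m : ℕ} (hq : q ≠ 0) (h : ((X - C a) ^ 2 * q).natDegree ≤ m) :
    q.degree < (m - 1 : ℕ) := by
  rw [natDegree_mul (pow_ne_zero 2 (X_sub_C_ne_zero a)) hq, natDegree_pow,
    natDegree_X_sub_C] at h
  exact degree_le_natDegree.trans_lt (by exact_mod_cast (by omega : q.natDegree < m - 1))

theorem stmt_1 (m : ℕ) (hm : 2 ≤ m) (P : Polynomial ℝ)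
    (hdeg : P.degree ≤ m) (hne : P ≠ Polynomial.Chebyshev.T ℝ m)
    (ξ : ℝ) (hξ : ξ ∈ Set.Ioo (-1 : ℝ) 1)
    (hmult : 2 ≤ (P - Polynomial.Chebyshev.T ℝ m).rootMultiplicity ξ)
    (hext : ∀ i : ℕ, 1 ≤ i → i ≤ m - 1 → ξ ≠ Real.cos (i * π / m)) :
    ∃ x ∈ Set.Ioo (-1 : ℝ) (Real.cos (π / m)), 1 < |P.eval x| := by
  by_contra! hsmall
  have hQ : P - T ℝ m ≠ 0 := sub_ne_zero.mpr hne
  obtain ⟨Q₁, hfac⟩ := (le_rootMultiplicity_iff hQ).mp hmult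
  have hQ₁ : Q₁ ≠ 0 := by rintro rfl; simp [hfac] at hQ
  have hc₁ : -1 < node m 1 := node_eq_neg_one (n := m) (by omega) ▸ node_lt le_rfl (by omega)
  have hbound := abs_eval_le_one_of_forall_mem_Ioo hc₁ (by simpa [node] using hsmall)
  have hnode : ∀ i ≤ m - 1, ξ ≠ node m (i + 1) := by
    intro i hi
    rcases (show i + 1 ≤ m - 1 ∨ i + 1 = m by omega) with h | h
    · exact_mod_cast hext (i + 1) (by omega) h
    · rw [h, node_eq_neg_one (by omega)]; exact hξ.1.ne'
  have hdegQ : (P - T ℝ m).natDegree ≤ m := natDegree_le_iff_degree_le.mpr <|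
    (degree_sub_le _ _).trans (max_le hdeg (by rw [degree_T]; simp))
  have hdegQ₁ := degree_lt_of_natDegree_X_sub_C_sq_mul_le hQ₁ (hfac ▸ hdegQ)
  refine hQ₁ (eq_zero_of_degree_lt_of_negOnePow_mul_eval_nonneg (v := fun i => node m (i + 1))
    ?_ hdegQ₁ fun i hi => ?_)
  · intro i hi j hj hij
    simp only [coe_range, Set.mem_Iio] at hj
    exact node_lt (by omega) (by omega)
  · have hc : node m (i + 1) ∈ Set.Icc (-1) (node m 1) :=
      ⟨node_mem_Icc.1,
        (strictAntiOn_node m).antitoneOn (by simp; omega) (by simp; omega) (by omega)⟩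
    have hQsign := zero_le_negOnePow_mul_eval_sub_T_node (by omega) (hbound _ hc)
    rw [hfac, eval_mul, eval_pow, eval_sub, eval_X, eval_C, mul_left_comm] at hQsign
    exact nonneg_of_mul_nonneg_right hQsign
      (sq_pos_of_ne_zero (sub_ne_zero.mpr (hnode i hi).symm))
end

section
/- For real h with 0 < h < π, let P(ε,h) = cos(h) − (hε/2)·sin(h). Then |P(ε,h)| ≤ 1 if and only if ε ∈ [α(h), β(h)], where α(h) = −(2/h)·tan(h/2) and β(h) = (2/h)·cot(h/2). Moreover α(h) < −1 and β(h) > 0 for all such h. -/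
/-!
With `s = sin (h/2)` and `c = cos (h/2)`, the half-angle formulas factor
`1 - P = 2 s (s + (hε/2) c)` and `1 + P = 2 c (c - (hε/2) s)`.
For `0 < h < π` both `s` and `c` are positive, so `|P| ≤ 1` amounts to
`-tan (h/2) ≤ hε/2 ≤ cot (h/2)`, i.e. `α ≤ ε ≤ β`. Finally `α < -1` is `h/2 < tan (h/2)`.
-/

open Real

lemma one_sub_cos_sub_mul_sin (x a : ℝ) :
    1 - (cos x - a * sin x) = 2 * sin (x / 2) * (sin (x / 2) + a * cos (x / 2)) := by
  have hx : x = 2 * (x / 2) := by ring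
  rw [hx, cos_two_mul, sin_two_mul, ← hx]
  nlinarith [sin_sq_add_cos_sq (x / 2)]

lemma one_add_cos_sub_mul_sin (x a : ℝ) :
    1 + (cos x - a * sin x) = 2 * cos (x / 2) * (cos (x / 2) - a * sin (x / 2)) := by
  have hx : x = 2 * (x / 2) := by ring
  rw [hx, cos_two_mul, sin_two_mul, ← hx]
  ring

lemma abs_cos_sub_mul_sin_le_one_iff {x a : ℝ} (hs : 0 < sin (x / 2)) (hc : 0 < cos (x / 2)) :
    |cos x - a * sin x| ≤ 1 ↔ -tan (x / 2) ≤ a ∧ a ≤ cos (x / 2) / sin (x / 2) := by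
  have lower : -1 ≤ cos x - a * sin x ↔ a ≤ cos (x / 2) / sin (x / 2) := by
    rw [← sub_nonneg, sub_neg_eq_add, add_comm, one_add_cos_sub_mul_sin,
      mul_nonneg_iff_of_pos_left (by positivity), sub_nonneg, le_div_iff₀ hs]
  have upper : cos x - a * sin x ≤ 1 ↔ -tan (x / 2) ≤ a := by
    rw [← sub_nonneg, one_sub_cos_sub_mul_sin, mul_nonneg_iff_of_pos_left (by positivity),
      tan_eq_sin_div_cos, ← neg_div, div_le_iff₀ hc]
    constructor <;> intro <;> linarith
  rw [abs_le, lower, upper, and_comm]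

theorem stmt_4 (h : ℝ) (hh : 0 < h ∧ h < π) :
    (∀ ε : ℝ,
      |Real.cos h - h * ε / 2 * Real.sin h| ≤ 1 ↔
        ε ∈ Set.Icc (-(2 / h) * Real.tan (h / 2))
          ((2 / h) * (Real.cos (h / 2) / Real.sin (h / 2)))) ∧
    -(2 / h) * Real.tan (h / 2) < -1 ∧
    0 < (2 / h) * (Real.cos (h / 2) / Real.sin (h / 2)) := by
  obtain ⟨h0, hπ⟩ := hh
  have hs : 0 < sin (h / 2) := sin_pos_of_pos_of_lt_pi (by linarith) (by linarith)
  have hc : 0 < cos (h / 2) := cos_pos_of_mem_Ioo ⟨by linarith [pi_pos], by linarith⟩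
  refine ⟨fun ε => ?_, ?_, by positivity⟩
  · rw [abs_cos_sub_mul_sin_le_one_iff hs hc, Set.mem_Icc, neg_mul, div_mul_eq_mul_div,
      div_mul_eq_mul_div, ← neg_div, div_le_iff₀ h0, le_div_iff₀ h0]
    constructor <;> rintro ⟨hα, hβ⟩ <;> constructor <;> linarith
  · have htan : h / 2 < tan (h / 2) := lt_tan (by linarith) (by linarith)
    rw [neg_mul, neg_lt_neg_iff, div_mul_eq_mul_div, lt_div_iff₀ h0]
    linarith
end

section
/- Let R = [[0,1],[−1,0]] and K = [[0,0],[−1,0]]. For any real coefficients r_1, ..., r_{m+1} with ∑ r_i = 1 and k_1, ..., k_m with ∑ k_i = 1, define M(ε,h) = exp(h r_{m+1} R)(I + ε h k_m K) exp(h r_m R) ⋯ (I + ε h k_1 K) exp(h r_1 R). Then for each fixed h, (1/2)·tr M(ε,h) = cos(h) − (εh/2)·sin(h) + O(ε²) as ε → 0; equivalently, the polynomial ε ↦ (1/2)tr M(ε,h) has constant coefficient cos(h) and linear coefficient −(h/2)sin(h). -/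
open Real Matrix Asymptotics

noncomputable def Rmat : Matrix (Fin 2) (Fin 2) ℝ := !![0, 1; -1, 0]

noncomputable def Kmat : Matrix (Fin 2) (Fin 2) ℝ := !![0, 0; -1, 0]

/-- `M(ε,h) = exp(h r_{m+1} R) (I + ε h k_m K) exp(h r_m R) ⋯ (I + ε h k_1 K) exp(h r_1 R)` -/
noncomputable def splitMat (m : ℕ) (r k : ℕ → ℝ) (ε h : ℝ) : Matrix (Fin 2) (Fin 2) ℝ :=
  NormedSpace.exp ((h * r (m + 1)) • Rmat) *
    (((List.range m).reverse.map fun i =>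
        (1 + (ε * h * k (i + 1)) • Kmat) *
          NormedSpace.exp ((h * r (i + 1)) • Rmat)).prod)

/-!
To first order in `ε` the trace of `M(ε,h)` is read off from the expansion
`∏ (aᵢ + ε bᵢ) = ∏ aᵢ + ε ∑ⱼ (∏_{i<j} aᵢ) bⱼ (∏_{i>j} aᵢ) + O(ε²)`, valid in any normed algebra.
Here `aᵢ = exp(h rᵢ R)` and `bᵢ = h kᵢ K exp(h rᵢ R)`. Since `R² = -1`, `exp(tR) = cos t + sin t R`,
so all `aᵢ` commute. The product of the `aᵢ` is then `exp(hR)` by consistency, of trace `2 cos h`, and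
by cyclicity of the trace each `bⱼ` contributes `h kⱼ tr(K exp(hR)) = -h kⱼ sin h`.
-/

open Topology

section AffineProduct

def affineProdDeriv {A : Type*} [Ring A] : List (A × A) → A
  | [] => 0
  | p :: l => p.1 * affineProdDeriv l + p.2 * (l.map Prod.fst).prod

variable {A : Type*} [NormedRing A] [NormedAlgebra ℝ A]

theorem isBigO_affine_mul {g : ℝ → A} {c d : A} (a b : A)
    (hg : (fun ε : ℝ => g ε - c - ε • d) =O[𝓝 0] fun ε => ε ^ 2) :
    (fun ε : ℝ => (a + ε • b) * g ε - a * c - ε • (a * d + b * c)) =O[𝓝 0]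
      fun ε => ε ^ 2 := by
  have hg₁ : (fun ε : ℝ => g ε - c) =O[𝓝 0] fun ε => ε := by
    have hd : (fun ε : ℝ => ε • d) =O[𝓝 0] fun ε => ε :=
      ((isBigO_refl _ _).smul (isBigO_const_const d one_ne_zero _)).congr_right
        fun ε => by simp
    exact ((hg.trans (isLittleO_pow_id one_lt_two).isBigO).add hd).congr_left fun ε => by abel
  have hlin : (fun ε : ℝ => ε • (b * (g ε - c))) =O[𝓝 0] fun ε => ε ^ 2 :=
    ((isBigO_refl _ _).smul (hg₁.const_mul_left b)).congr_right fun ε => by simp [sq]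
  refine ((hg.const_mul_left a).add hlin).congr_left fun ε => ?_
  simp only [add_mul, mul_sub, smul_mul_assoc, mul_smul_comm, smul_sub, smul_add]
  abel

theorem isBigO_list_prod_affine (l : List (A × A)) :
    (fun ε : ℝ => (l.map fun p => p.1 + ε • p.2).prod - (l.map Prod.fst).prod -
      ε • affineProdDeriv l) =O[𝓝 0] fun ε => ε ^ 2 := by
  induction l with
  | nil => simpa [affineProdDeriv] using isBigO_zero _ _
  | cons p l ih => simpa [affineProdDeriv] using isBigO_affine_mul p.1 p.2 ih

end AffineProduct

section MatrixTrace

attribute [local instance] Matrix.linftyOpNormedRing Matrix.linftyOpNormedAlgebra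

theorem isBigO_trace_mul_list_prod_affine {n : Type*} [Fintype n] [DecidableEq n]
    (C : Matrix n n ℝ) (l : List (Matrix n n ℝ × Matrix n n ℝ)) :
    (fun ε : ℝ => trace (C * (l.map fun p => p.1 + ε • p.2).prod) -
      trace (C * (l.map Prod.fst).prod) - ε * trace (C * affineProdDeriv l)) =O[𝓝 0]
      fun ε => ε ^ 2 := by
  let τ : Matrix n n ℝ →L[ℝ] ℝ :=
    LinearMap.toContinuousLinearMap (traceLinearMap n ℝ ℝ ∘ₗ LinearMap.mulLeft ℝ C)
  refine ((τ.isBigO_comp _ _).trans (isBigO_list_prod_affine l)).congr_left fun ε => ?_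
  change trace (C * _) = _
  rw [Matrix.mul_sub, Matrix.mul_sub, trace_sub, trace_sub, Matrix.mul_smul, trace_smul,
    smul_eq_mul]

end MatrixTrace

theorem exp_smul_eq_cos_add_sin {A : Type*} [NormedRing A] [NormedAlgebra ℝ A] [Algebra ℚ A]
    {J : A} (hJ : J * J = -1) (t : ℝ) :
    NormedSpace.exp (t • J) = cos t • (1 : A) + sin t • J := by
  let φ : ℂ →ₐ[ℝ] A := Complex.lift ⟨J, hJ⟩
  have hφ : Continuous φ := φ.toLinearMap.continuous_of_finiteDimensional
  have ht : t • J = φ (t * Complex.I) := by simp [φ]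
  rw [ht, ← NormedSpace.map_exp φ hφ, ← Complex.exp_eq_exp_ℂ]
  simp [φ, Complex.lift_apply, Algebra.algebraMap_eq_smul_one, Complex.exp_ofReal_mul_I_re,
    Complex.exp_ofReal_mul_I_im]

section Splitting

open NormedSpace Finset

theorem Rmat_mul_self : Rmat * Rmat = -1 := by
  ext i j
  fin_cases i <;> fin_cases j <;> simp [Rmat]

theorem exp_smul_Rmat (t : ℝ) : exp (t • Rmat) = cos t • 1 + sin t • Rmat := by
  let := Matrix.linftyOpNormedRing (n := Fin 2) (α := ℝ)
  let := Matrix.linftyOpNormedAlgebra (R := ℝ) (n := Fin 2) (α := ℝ)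
  exact exp_smul_eq_cos_add_sin Rmat_mul_self t

theorem exp_smul_Rmat_mul (a b : ℝ) :
    exp (a • Rmat) * exp (b • Rmat) = exp ((a + b) • Rmat) := by
  rw [add_smul, Matrix.exp_add_of_commute _ _ (((Commute.refl Rmat).smul_left a).smul_right b)]

theorem trace_exp_smul_Rmat (t : ℝ) : trace (exp (t • Rmat)) = 2 * cos t := by
  rw [exp_smul_Rmat]
  simp [Rmat, trace_fin_two]
  ring

theorem trace_Kmat_mul_exp_smul_Rmat (t : ℝ) : trace (Kmat * exp (t • Rmat)) = -sin t := by
  rw [exp_smul_Rmat]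
  simp [Rmat, Kmat, trace_fin_two, Matrix.mul_add]

theorem trace_exp_smul_Rmat_mul_Kmat_mul (a b : ℝ) :
    trace (exp (a • Rmat) * (Kmat * exp (b • Rmat))) = -sin (a + b) := by
  rw [trace_mul_comm, mul_assoc, exp_smul_Rmat_mul, trace_Kmat_mul_exp_smul_Rmat, add_comm]

noncomputable def splitFactors (h : ℝ) (r k : ℕ → ℝ) (n : ℕ) :
    List (Matrix (Fin 2) (Fin 2) ℝ × Matrix (Fin 2) (Fin 2) ℝ) :=
  (List.range n).reverse.map fun i =>
    (exp ((h * r (i + 1)) • Rmat), (h * k (i + 1)) • (Kmat * exp ((h * r (i + 1)) • Rmat)))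

theorem splitFactors_succ (h : ℝ) (r k : ℕ → ℝ) (n : ℕ) :
    splitFactors h r k (n + 1) =
      (exp ((h * r (n + 1)) • Rmat), (h * k (n + 1)) • (Kmat * exp ((h * r (n + 1)) • Rmat))) ::
        splitFactors h r k n := by
  simp [splitFactors, List.range_succ]

theorem splitMat_eq (m : ℕ) (r k : ℕ → ℝ) (ε h : ℝ) :
    splitMat m r k ε h =
      exp ((h * r (m + 1)) • Rmat) * ((splitFactors h r k m).map fun p => p.1 + ε • p.2).prod := by
  simp only [splitMat, splitFactors, List.map_map, Function.comp_def, add_mul, one_mul,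
    smul_mul_assoc, smul_smul, mul_assoc]

theorem prod_map_fst_splitFactors (h : ℝ) (r k : ℕ → ℝ) (n : ℕ) :
    ((splitFactors h r k n).map Prod.fst).prod = exp ((h * ∑ i ∈ Icc 1 n, r i) • Rmat) := by
  induction n with
  | zero => simp [splitFactors]
  | succ n ih =>
    rw [splitFactors_succ, List.map_cons, List.prod_cons, ih, exp_smul_Rmat_mul,
      sum_Icc_succ_top (by omega), mul_add, add_comm]

theorem trace_exp_mul_affineProdDeriv_splitFactors (h : ℝ) (r k : ℕ → ℝ) (n : ℕ) (t : ℝ) :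
    trace (exp (t • Rmat) * affineProdDeriv (splitFactors h r k n)) =
      -(h * ∑ i ∈ Icc 1 n, k i) * sin (t + h * ∑ i ∈ Icc 1 n, r i) := by
  induction n generalizing t with
  | zero => simp [splitFactors, affineProdDeriv]
  | succ n ih =>
    rw [splitFactors_succ, affineProdDeriv, prod_map_fst_splitFactors, smul_mul_assoc, mul_assoc,
      exp_smul_Rmat_mul, mul_add, trace_add, ← mul_assoc, exp_smul_Rmat_mul, ih, Matrix.mul_smul,
      trace_smul, trace_exp_smul_Rmat_mul_Kmat_mul, sum_Icc_succ_top (by omega), sum_Icc_succ_top (by omega), smul_eq_mul]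
    have hangle : t + h * (∑ i ∈ Icc 1 n, r i + r (n + 1)) =
        t + h * r (n + 1) + h * ∑ i ∈ Icc 1 n, r i := by ring
    rw [← add_assoc, hangle]
    ring

end Splitting

open NormedSpace Finset in
theorem stmt_10_general (m : ℕ) (r k : ℕ → ℝ)
    (hr : ∑ i ∈ Finset.Icc 1 (m + 1), r i = 1)
    (hk : ∑ i ∈ Finset.Icc 1 m, k i = 1) (h : ℝ) :
    (fun ε : ℝ =>
        (1 / 2) * Matrix.trace (splitMat m r k ε h) -
          (Real.cos h - ε * h / 2 * Real.sin h)) =O[nhds 0]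
      fun ε : ℝ => ε ^ 2 := by
  simp only [splitMat_eq]
  set C := exp ((h * r (m + 1)) • Rmat)
  set l := splitFactors h r k m
  have htotal : h * r (m + 1) + h * ∑ i ∈ Icc 1 m, r i = h := by
    rw [sum_Icc_succ_top (by omega)] at hr
    linear_combination h * hr
  have h₀ : trace (C * (l.map Prod.fst).prod) = 2 * cos h := by
    rw [prod_map_fst_splitFactors, exp_smul_Rmat_mul, htotal, trace_exp_smul_Rmat]
  have h₁ : trace (C * affineProdDeriv l) = -(h * sin h) := by
    rw [trace_exp_mul_affineProdDeriv_splitFactors, hk, htotal, mul_one, neg_mul]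
  refine ((isBigO_trace_mul_list_prod_affine C l).const_mul_left (1 / 2)).congr_left fun ε => ?_
  rw [h₀, h₁]
  ring

theorem stmt_10 (m : ℕ) (hm : 1 ≤ m) (r k : ℕ → ℝ)
    (hr : ∑ i ∈ Finset.Icc 1 (m + 1), r i = 1)
    (hk : ∑ i ∈ Finset.Icc 1 m, k i = 1) (h : ℝ) :
    (fun ε : ℝ =>
        (1 / 2) * Matrix.trace (splitMat m r k ε h) -
          (Real.cos h - ε * h / 2 * Real.sin h)) =O[nhds 0]
      fun ε : ℝ => ε ^ 2 :=
  stmt_10_general m r k hr hk h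
end

section
/- For each integer m ≥ 2, the equation (mh/2)·sin(h/m) = cos(π/m) − cos(h/m) has a smallest positive root h_m, and h_m < mπ. For m = 1 the smallest positive root of this equation is h_1 = π. -/
/-!
Put `g h = (m h / 2) sin (h / m)` and `k h = cos (π / m) - cos (h / m)`. At `h = 0` we have
`g = 0 > cos (π / m) - 1 = k`, and at `h = m π` we have `g = 0 < cos (π / m) + 1 = k`, so `g = k`
has a root in `(0, m π)`; the roots in `[0, m π]` form a compact set whose least element is then
the smallest positive root. For `m = 1` the equation reads `(h / 2) sin h = -1 - cos h`, whose
left side is positive and right side nonpositive on `(0, π)`, while `h = π` is a root.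
-/

open Real Set

theorem exists_isLeast_eq_of_continuousOn {g k : ℝ → ℝ} {a b : ℝ} (hab : a ≤ b)
    (hg : ContinuousOn g (Icc a b)) (hk : ContinuousOn k (Icc a b))
    (ha : k a < g a) (hb : g b < k b) :
    ∃ c, IsLeast {x | a < x ∧ g x = k x} c ∧ c < b := by
  obtain ⟨x, hx, hgx⟩ : ∃ x ∈ Ioo a b, g x = k x := by
    obtain ⟨x, hx, hx0⟩ := intermediate_value_Ioo' hab (hg.sub hk)
      (show (0 : ℝ) ∈ Ioo (g b - k b) (g a - k a) from ⟨by linarith, by linarith⟩)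
    exact ⟨x, hx, sub_eq_zero.mp hx0⟩
  have hclosed : IsClosed (Icc a b ∩ (fun x => (g x, k x)) ⁻¹' diagonal ℝ) :=
    (hg.prodMk hk).preimage_isClosed_of_isClosed isClosed_Icc isClosed_diagonal
  obtain ⟨c, ⟨hcab, hgc⟩, hc_least⟩ :=
    (isCompact_Icc.of_isClosed_subset hclosed inter_subset_left).exists_isLeast ⟨x, Ioo_subset_Icc_self hx, hgx⟩
  have hcx : c ≤ x := hc_least ⟨Ioo_subset_Icc_self hx, hgx⟩
  have hac : a ≠ c := by
    rintro rfl
    exact ha.ne' hgc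
  refine ⟨c, ⟨⟨hcab.1.lt_of_ne hac, hgc⟩, fun y ⟨hay, hgy⟩ => ?_⟩, hcx.trans_lt hx.2⟩
  by_cases hyb : y ≤ b
  · exact hc_least ⟨⟨hay.le, hyb⟩, hgy⟩
  · linarith [hx.2]

theorem cos_pi_div_mem_Ioo {m : ℝ} (hm : 1 < m) : cos (π / m) ∈ Ioo (-1) 1 := by
  have hpos : 0 < π / m := div_pos pi_pos (by linarith)
  have hlt : π / m < π := div_lt_self pi_pos hm
  constructor
  · simpa using cos_lt_cos_of_nonneg_of_le_pi hpos.le le_rfl hlt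
  · simpa using cos_lt_cos_of_nonneg_of_le_pi le_rfl hlt.le hpos

theorem stmt_15 :
    (∀ m : ℕ, 2 ≤ m →
      ∃ hm : ℝ,
        IsLeast {h : ℝ | 0 < h ∧
            m * h / 2 * Real.sin (h / m) = Real.cos (π / m) - Real.cos (h / m)} hm ∧
        hm < m * π) ∧
    IsLeast {h : ℝ | 0 < h ∧
        1 * h / 2 * Real.sin (h / 1) = Real.cos (π / 1) - Real.cos (h / 1)} π := by
  refine ⟨fun m hm => ?_, ⟨⟨pi_pos, by simp⟩, fun y ⟨hy0, hy⟩ => ?_⟩⟩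
  · have hm1 : (1 : ℝ) < m := by exact_mod_cast hm
    have hm0 : (m : ℝ) ≠ 0 := by positivity
    obtain ⟨hcos_gt, hcos_lt⟩ := cos_pi_div_mem_Ioo hm1
    refine exists_isLeast_eq_of_continuousOn (by positivity) (by fun_prop) (by fun_prop)
      ?_ ?_
    · simpa using hcos_lt
    · simp only [mul_div_cancel_left₀ π hm0, sin_pi, cos_pi, mul_zero]
      linarith
  · by_contra! hlt
    have hsin : 0 < sin y := sin_pos_of_pos_of_lt_pi hy0 hlt
    simp only [one_mul, div_one, cos_pi] at hy
    nlinarith [neg_one_le_cos y]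
end

section
/- Let m be a positive even integer, θ_1, ..., θ_m real numbers, and k_1, ..., k_m real numbers satisfying the palindromic conditions k_{m+1−j} = k_j and θ_i − θ_{m+1−j} = θ_i + θ_j − 1 for all i, j, together with ∑_{i=1}^{m/2} k_i = 1/2. Then for every positive integer n, S = ∑_{i=1}^m ∑_{j=1}^m k_i k_j sin²(nπ(θ_i − θ_j)) satisfies S ≤ 1/2. -/
/-! Write φᵢ = nπθᵢ. Reflecting the inner index j ↦ m + 1 − j turns the sum S into the same
sum with sin²(φᵢ + φⱼ − nπ) = sin²(φᵢ + φⱼ). Adding the two forms and using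
sin²(a − b) + sin²(a + b) = 1 − cos 2a · cos 2b gives 2S = (∑ kᵢ)² − (∑ kᵢ cos 2φᵢ)², and the
palindromic weights satisfy ∑ kᵢ = 2 ∑_{i ≤ m/2} kᵢ = 1, so 2S ≤ 1. -/

open Real Finset

theorem Real.sin_sub_nat_mul_pi_sq (x : ℝ) (n : ℕ) : sin (x - n * π) ^ 2 = sin x ^ 2 := by
  rw [sin_sub_nat_mul_pi, mul_pow, ← pow_mul, mul_comm n 2, pow_mul, neg_one_sq, one_pow,
    one_mul]

theorem Real.sin_sq_sub_add_sin_sq_add (a b : ℝ) :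
    sin (a - b) ^ 2 + sin (a + b) ^ 2 = 1 - cos (2 * a) * cos (2 * b) := by
  rw [sin_sub, sin_add, cos_two_mul, cos_two_mul]
  linear_combination (2 * cos b ^ 2) * sin_sq_add_cos_sq a + (2 * cos a ^ 2) * sin_sq_add_cos_sq b

theorem Finset.sum_sum_mul_sin_sq_sub_add_sin_sq_add {ι : Type*} (s : Finset ι) (k φ : ι → ℝ) :
    ∑ i ∈ s, ∑ j ∈ s, k i * k j * (sin (φ i - φ j) ^ 2 + sin (φ i + φ j) ^ 2) =
      (∑ i ∈ s, k i) ^ 2 - (∑ i ∈ s, k i * cos (2 * φ i)) ^ 2 := by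
  simp_rw [sin_sq_sub_add_sin_sq_add, sq, sum_mul_sum, ← sum_sub_distrib]
  exact sum_congr rfl fun i _ => sum_congr rfl fun j _ => by ring

section Reflection

variable {M : Type*} [AddCommMonoid M]

theorem Finset.sum_Icc_one_reflect (f : ℕ → M) (m : ℕ) :
    ∑ j ∈ Icc 1 m, f (m + 1 - j) = ∑ j ∈ Icc 1 m, f j := by
  refine sum_nbij' (fun j => m + 1 - j) (fun j => m + 1 - j) ?_ ?_ ?_ ?_ fun _ _ => rfl <;>
    intro j hj <;> simp only [mem_Icc] at hj ⊢ <;> omega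

theorem Finset.sum_Icc_one_add_self_of_palindrome (k : ℕ → M) (t : ℕ)
    (hk : ∀ j ∈ Icc 1 (t + t), k (t + t + 1 - j) = k j) :
    ∑ i ∈ Icc 1 (t + t), k i = ∑ i ∈ Icc 1 t, k i + ∑ i ∈ Icc 1 t, k i := by
  have hupper : ∑ i ∈ Ioc t (t + t), k i = ∑ i ∈ Ioc 0 t, k i := by
    refine sum_nbij' (fun j => t + t + 1 - j) (fun j => t + t + 1 - j) ?_ ?_ ?_ ?_ ?_ <;>
      intro j hj <;> simp only [mem_Ioc] at hj ⊢
    any_goals omega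
    exact (hk j (mem_Icc.mpr ⟨by omega, by omega⟩)).symm
  change ∑ i ∈ Ioc 0 (t + t), k i = ∑ i ∈ Ioc 0 t, k i + ∑ i ∈ Ioc 0 t, k i
  rw [← sum_Ioc_consecutive k (Nat.zero_le t) (Nat.le_add_right t t), hupper]

end Reflection

theorem stmt_16_general (m : ℕ) (hme : Even m)
    (θ k : ℕ → ℝ)
    (hkpal : ∀ j ∈ Finset.Icc 1 m, k (m + 1 - j) = k j)
    (hθpal : ∀ i ∈ Finset.Icc 1 m, ∀ j ∈ Finset.Icc 1 m,
        θ i - θ (m + 1 - j) = θ i + θ j - 1)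
    (hksum : ∑ i ∈ Finset.Icc 1 (m / 2), k i = 1 / 2)
    (n : ℕ) :
    ∑ i ∈ Finset.Icc 1 m, ∑ j ∈ Finset.Icc 1 m,
        k i * k j * Real.sin (n * π * (θ i - θ j)) ^ 2 ≤ 1 / 2 := by
  have htotal : ∑ i ∈ Icc 1 m, k i = 1 := by
    obtain ⟨t, rfl⟩ := hme
    rw [show (t + t) / 2 = t by omega] at hksum
    rw [sum_Icc_one_add_self_of_palindrome k t hkpal, hksum]
    norm_num
  have hreflect : ∑ i ∈ Icc 1 m, ∑ j ∈ Icc 1 m, k i * k j * sin (n * π * (θ i - θ j)) ^ 2 =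
      ∑ i ∈ Icc 1 m, ∑ j ∈ Icc 1 m, k i * k j * sin (n * π * θ i + n * π * θ j) ^ 2 := by
    refine sum_congr rfl fun i hi => ?_
    rw [← sum_Icc_one_reflect]
    refine sum_congr rfl fun j hj => ?_
    rw [hkpal j hj, hθpal i hi j hj,
      show (n : ℝ) * π * (θ i + θ j - 1) = n * π * θ i + n * π * θ j - n * π by ring,
      sin_sub_nat_mul_pi_sq]
  have htwice := sum_sum_mul_sin_sq_sub_add_sin_sq_add (Icc 1 m) k (fun i => n * π * θ i)
  simp only [mul_add, sum_add_distrib, ← mul_sub, ← hreflect, htotal] at htwice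
  nlinarith [sq_nonneg (∑ i ∈ Icc 1 m, k i * cos (2 * (n * π * θ i)))]

theorem stmt_16 (m : ℕ) (hm : 0 < m) (hme : Even m)
    (θ k : ℕ → ℝ)
    (hkpal : ∀ j ∈ Finset.Icc 1 m, k (m + 1 - j) = k j)
    (hθpal : ∀ i ∈ Finset.Icc 1 m, ∀ j ∈ Finset.Icc 1 m,
        θ i - θ (m + 1 - j) = θ i + θ j - 1)
    (hksum : ∑ i ∈ Finset.Icc 1 (m / 2), k i = 1 / 2)
    (n : ℕ) (hn : 0 < n) :
    ∑ i ∈ Finset.Icc 1 m, ∑ j ∈ Finset.Icc 1 m,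
        k i * k j * Real.sin (n * π * (θ i - θ j)) ^ 2 ≤ 1 / 2 :=
  stmt_16_general m hme θ k hkpal hθpal hksum n
end
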